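/- arXiv:2404.09628 — 6 statements merged into one kernel-verified Lean document; each statement's English description precedes it below -/
import Mathlib

section
/- With notation as above, the quadratic form X ↦ ⟨X, 𝕄X⟩ satisfies the Legendre–Hadamard condition ⟨u ⊗ v, 𝕄(u ⊗ v)⟩ ≥ λ |u|² |v|² for some λ > 0 and all u ∈ F, v ∈ ℝⁿ, if and only if the operator 𝒟 = (𝒜, ℬ) is elliptic, i.e. the symbol 𝔻(ξ) = (𝔸(ξ), 𝔹(ξ)) : F → G ⊕ E is injective for every ξ ∈ ℝⁿ \ {0}. -/
open LinearMap Finset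

private lemma lh_key (n dF dG dE : ℕ)
    (A : Fin n → EuclideanSpace ℝ (Fin dF) →ₗ[ℝ] EuclideanSpace ℝ (Fin dG))
    (B : Fin n → EuclideanSpace ℝ (Fin dF) →ₗ[ℝ] EuclideanSpace ℝ (Fin dE))
    (u : EuclideanSpace ℝ (Fin dF)) (v : Fin n → ℝ) :
    ∑ i, ∑ j, (inner ℝ (v i • u)
        (((adjoint (A i)).comp (A j) + (adjoint (B j)).comp (B i)) (v j • u)) : ℝ)
      = ‖(∑ j, v j • A j) u‖ ^ 2 + ‖(∑ j, v j • B j) u‖ ^ 2 := by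
  have hA : ‖(∑ j, v j • A j) u‖ ^ 2 = ∑ i, ∑ j, v i * v j * (inner ℝ (A i u) (A j u) : ℝ) := by
    rw [← real_inner_self_eq_norm_sq]
    simp only [LinearMap.sum_apply, LinearMap.smul_apply, sum_inner, inner_sum,
      real_inner_smul_left, real_inner_smul_right]
    congr 1; ext i; congr 1; ext j; ring_nf; rw [real_inner_comm]
  have hB : ‖(∑ j, v j • B j) u‖ ^ 2 = ∑ i, ∑ j, v i * v j * (inner ℝ (B i u) (B j u) : ℝ) := by
    rw [← real_inner_self_eq_norm_sq]
    simp only [LinearMap.sum_apply, LinearMap.smul_apply, sum_inner, inner_sum,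
      real_inner_smul_left, real_inner_smul_right]
    congr 1; ext i; congr 1; ext j; ring_nf; rw [real_inner_comm]
  rw [hA, hB, ← Finset.sum_add_distrib]
  congr 1; ext i
  rw [← Finset.sum_add_distrib]
  congr 1; ext j
  simp only [LinearMap.add_apply, LinearMap.comp_apply, map_smul, inner_add_right,
    real_inner_smul_left, real_inner_smul_right, LinearMap.adjoint_inner_right,
    real_inner_comm (B j u) (B i u)]
  ring

private lemma lh_smul_symbol {V W : Type*} [AddCommGroup V] [Module ℝ V]
    [AddCommGroup W] [Module ℝ W] {n : ℕ} (L : Fin n → V →ₗ[ℝ] W) (c d : ℝ)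
    (u : V) (v : Fin n → ℝ) :
    (∑ j, (d * v j) • L j) (c • u) = (c * d) • ((∑ j, v j • L j) u) := by
  simp only [LinearMap.sum_apply, LinearMap.smul_apply, map_smul, Finset.smul_sum, smul_smul]
  congr 1; ext j; ring_nf

/-- The quadratic form `X ↦ ⟨X, 𝕄X⟩` satisfies the Legendre–Hadamard
condition `⟨u ⊗ v, 𝕄(u ⊗ v)⟩ ≥ λ |u|² |v|²` for some `λ > 0` iff the operator
`𝒟 = (𝒜, ℬ)` is elliptic, i.e. the symbol `𝔻(ξ) = (𝔸(ξ), 𝔹(ξ))` is injective for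
all `ξ ≠ 0`. -/
theorem legendre_hadamard_iff_elliptic
    (n dF dG dE : ℕ)
    (A : Fin n → EuclideanSpace ℝ (Fin dF) →ₗ[ℝ] EuclideanSpace ℝ (Fin dG))
    (B : Fin n → EuclideanSpace ℝ (Fin dF) →ₗ[ℝ] EuclideanSpace ℝ (Fin dE))
    (M : Fin n → Fin n →
      (EuclideanSpace ℝ (Fin dF) →ₗ[ℝ] EuclideanSpace ℝ (Fin dF)))
    (hM : ∀ i j, M i j = (adjoint (A i)).comp (A j) + (adjoint (B j)).comp (B i))
    (Mcal : (Fin n → EuclideanSpace ℝ (Fin dF)) → (Fin n → EuclideanSpace ℝ (Fin dF)))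
    (hMcal : ∀ X i, Mcal X i = ∑ j, M i j (X j)) :
    (∃ lam : ℝ, 0 < lam ∧ ∀ (u : EuclideanSpace ℝ (Fin dF)) (v : EuclideanSpace ℝ (Fin n)),
        lam * (‖u‖ ^ 2 * ‖v‖ ^ 2) ≤ ∑ i, (inner ℝ (v i • u) (Mcal (fun j => v j • u) i) : ℝ))
      ↔
    (∀ v : EuclideanSpace ℝ (Fin n), v ≠ 0 →
        Function.Injective ((∑ j, v j • A j).prod (∑ j, v j • B j))) := by
  have key : ∀ (u : EuclideanSpace ℝ (Fin dF)) (v : EuclideanSpace ℝ (Fin n)),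
      ∑ i, (inner ℝ (v i • u) (Mcal (fun j => v j • u) i) : ℝ)
        = ‖(∑ j, v j • A j) u‖ ^ 2 + ‖(∑ j, v j • B j) u‖ ^ 2 := by
    intro u v
    simp only [hMcal, hM, inner_sum]
    exact lh_key n dF dG dE A B u v
  constructor
  · rintro ⟨lam, hlam, h⟩ v hv
    rw [← LinearMap.ker_eq_bot, LinearMap.ker_eq_bot']
    intro u hu
    simp only [LinearMap.prod_apply, Function.prod, Prod.mk_eq_zero] at hu
    have h1 := h u v
    rw [key, hu.1, hu.2] at h1
    simp only [norm_zero] at h1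
    have hv' : 0 < ‖v‖ := norm_pos_iff.2 hv
    norm_num at h1
    by_contra hne
    have hupos : 0 < ‖u‖ := norm_pos_iff.2 hne
    have := mul_pos hlam (mul_pos (pow_pos hupos 2) (pow_pos hv' 2))
    linarith
  · intro hinj
    by_cases hdeg : (∀ u : EuclideanSpace ℝ (Fin dF), u = 0) ∨
        (∀ v : EuclideanSpace ℝ (Fin n), v = 0)
    · refine ⟨1, one_pos, fun u v => ?_⟩
      rw [key]
      have h0 : ‖u‖ ^ 2 * ‖v‖ ^ 2 = 0 := by
        rcases hdeg with h | h
        · rw [h u]; simp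
        · rw [h v]; simp
      rw [h0, mul_zero]
      positivity
    · push_neg at hdeg
      obtain ⟨⟨u0, hu0⟩, ⟨v0, hv0⟩⟩ := hdeg
      set g : EuclideanSpace ℝ (Fin dF) × EuclideanSpace ℝ (Fin n) → ℝ :=
        fun p => ‖(∑ j, p.2 j • A j) p.1‖ ^ 2 + ‖(∑ j, p.2 j • B j) p.1‖ ^ 2 with hg_def
      have hg : Continuous g := by
        apply Continuous.add
        · apply Continuous.pow
          apply Continuous.norm
          simp only [LinearMap.sum_apply, LinearMap.smul_apply]
          apply continuous_finset_sum
          intro j _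
          exact ((PiLp.continuous_apply 2 _ j).comp continuous_snd).smul
            ((A j).continuous_of_finiteDimensional.comp continuous_fst)
        · apply Continuous.pow
          apply Continuous.norm
          simp only [LinearMap.sum_apply, LinearMap.smul_apply]
          apply continuous_finset_sum
          intro j _
          exact ((PiLp.continuous_apply 2 _ j).comp continuous_snd).smul
            ((B j).continuous_of_finiteDimensional.comp continuous_fst)
      set S := (Metric.sphere (0 : EuclideanSpace ℝ (Fin dF)) 1) ×ˢ
        (Metric.sphere (0 : EuclideanSpace ℝ (Fin n)) 1) with hS_def
      have hScomp : IsCompact S := (isCompact_sphere _ _).prod (isCompact_sphere _ _)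
      have hSne : S.Nonempty :=
        ⟨(‖u0‖⁻¹ • u0, ‖v0‖⁻¹ • v0), mem_sphere_zero_iff_norm.mpr (norm_smul_inv_norm hu0),
          mem_sphere_zero_iff_norm.mpr (norm_smul_inv_norm hv0)⟩
      obtain ⟨p0, hp0S, hp0min'⟩ := hScomp.exists_isMinOn hSne hg.continuousOn
      have hp0min : ∀ p ∈ S, g p0 ≤ g p := fun p hp => hp0min' hp
      have hp01 : ‖p0.1‖ = 1 := by
        have := hp0S.1; rwa [mem_sphere_zero_iff_norm] at this
      have hp02 : ‖p0.2‖ = 1 := by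
        have := hp0S.2; rwa [mem_sphere_zero_iff_norm] at this
      have hgpos : 0 < g p0 := by
        rcases lt_or_eq_of_le (by positivity : (0:ℝ) ≤ g p0) with h | h
        · exact h
        exfalso
        simp only [hg_def] at h
        have h' : ‖(∑ j, p0.2 j • A j) p0.1‖ ^ 2 + ‖(∑ j, p0.2 j • B j) p0.1‖ ^ 2 = 0 := h.symm
        have h2 := (add_eq_zero_iff_of_nonneg (by positivity) (by positivity)).mp h'
        have hA0 : (∑ j, p0.2 j • A j) p0.1 = 0 ∧ (∑ j, p0.2 j • B j) p0.1 = 0 := by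
          constructor <;> rw [← norm_eq_zero, ← pow_eq_zero_iff (n := 2) (two_ne_zero)]
          exacts [h2.1, h2.2]
        have hv2 : p0.2 ≠ 0 := by
          intro h; rw [h, norm_zero] at hp02; exact zero_ne_one hp02
        have := hinj p0.2 hv2
        have h0 : ((∑ j, p0.2 j • A j).prod (∑ j, p0.2 j • B j)) p0.1
            = ((∑ j, p0.2 j • A j).prod (∑ j, p0.2 j • B j)) 0 := by
          simp only [LinearMap.sum_apply, LinearMap.smul_apply] at hA0
          simp [LinearMap.prod_apply, Function.prod, hA0.1, hA0.2]
        have := this h0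
        rw [this, norm_zero] at hp01
        exact zero_ne_one hp01
      refine ⟨g p0, hgpos, fun u v => ?_⟩
      rw [key]
      by_cases hu : u = 0
      · rw [hu]; simp
      by_cases hv : v = 0
      · rw [hv]; simp
      have hun : ‖u‖ ≠ 0 := norm_ne_zero_iff.2 hu
      have hvn : ‖v‖ ≠ 0 := norm_ne_zero_iff.2 hv
      have hmem : (‖u‖⁻¹ • u, ‖v‖⁻¹ • v) ∈ S :=
        ⟨mem_sphere_zero_iff_norm.mpr (norm_smul_inv_norm hu),
          mem_sphere_zero_iff_norm.mpr (norm_smul_inv_norm hv)⟩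
      have hmin := hp0min _ hmem
      have hscaleA : (∑ j, v j • A j) u
          = (‖u‖ * ‖v‖) • ((∑ j, (‖v‖⁻¹ • v) j • A j) (‖u‖⁻¹ • u)) := by
        have := lh_smul_symbol (fun j => A j) ‖u‖⁻¹ ‖v‖⁻¹ u (fun j => v j)
        simp only [PiLp.smul_apply, smul_eq_mul]
        rw [this, smul_smul]
        rw [mul_comm ‖u‖ ‖v‖, mul_assoc, ← mul_assoc ‖u‖, mul_inv_cancel₀ hun,
          one_mul, mul_inv_cancel₀ hvn, one_smul]
      have hscaleB : (∑ j, v j • B j) u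
          = (‖u‖ * ‖v‖) • ((∑ j, (‖v‖⁻¹ • v) j • B j) (‖u‖⁻¹ • u)) := by
        have := lh_smul_symbol (fun j => B j) ‖u‖⁻¹ ‖v‖⁻¹ u (fun j => v j)
        simp only [PiLp.smul_apply, smul_eq_mul]
        rw [this, smul_smul]
        rw [mul_comm ‖u‖ ‖v‖, mul_assoc, ← mul_assoc ‖u‖, mul_inv_cancel₀ hun,
          one_mul, mul_inv_cancel₀ hvn, one_smul]
      rw [hscaleA, hscaleB, norm_smul, norm_smul, mul_pow, mul_pow]
      have habs : ‖‖u‖ * ‖v‖‖ ^ 2 = ‖u‖ ^ 2 * ‖v‖ ^ 2 := by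
        rw [Real.norm_eq_abs, sq_abs, mul_pow]
      rw [habs, ← mul_add]
      have hge : g p0 ≤ g (‖u‖⁻¹ • u, ‖v‖⁻¹ • v) := hmin
      have hgform : g (‖u‖⁻¹ • u, ‖v‖⁻¹ • v)
          = ‖(∑ j, (‖v‖⁻¹ • v) j • A j) (‖u‖⁻¹ • u)‖ ^ 2
            + ‖(∑ j, (‖v‖⁻¹ • v) j • B j) (‖u‖⁻¹ • u)‖ ^ 2 := rfl
      rw [hgform] at hge
      rw [mul_comm (‖u‖ ^ 2 * ‖v‖ ^ 2)]
      exact mul_le_mul_of_nonneg_right hge (by positivity)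
end

section
/- (Sweeney identity) For the complexified symbols, for every u ∈ F ⊗ ℂ and ζ ∈ ℂⁿ, one has ⟨u ⊗ ζ, 𝕄(u ⊗ ζ)⟩ = |𝔸(ζ)u|² + |𝔹(ζ̄)u|², where 𝔸(ζ) = Σ_j ζ_j A_j and 𝔹(ζ̄) = Σ_j ζ̄_j B_j and the pairing uses the Hermitian inner product. In particular, restricting to real ξ ∈ ℝⁿ gives ⟨u ⊗ ξ, 𝕄(u ⊗ ξ)⟩ = |𝔻(ξ)u|². -/
open LinearMap Finset

/-- Sweeney identity: for the complexified symbols,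
`⟨u ⊗ ζ, 𝕄(u ⊗ ζ)⟩ = |𝔸(ζ)u|² + |𝔹(ζ̄)u|²` for all `u ∈ F ⊗ ℂ`, `ζ ∈ ℂⁿ`,
using the Hermitian inner product; restricting to real `ξ` gives
`⟨u ⊗ ξ, 𝕄(u ⊗ ξ)⟩ = |𝔻(ξ)u|²`. -/
theorem sweeney_identity
    (n dF dG dE : ℕ)
    (A : Fin n → EuclideanSpace ℂ (Fin dF) →ₗ[ℂ] EuclideanSpace ℂ (Fin dG))
    (B : Fin n → EuclideanSpace ℂ (Fin dF) →ₗ[ℂ] EuclideanSpace ℂ (Fin dE))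
    (M : Fin n → Fin n →
      (EuclideanSpace ℂ (Fin dF) →ₗ[ℂ] EuclideanSpace ℂ (Fin dF)))
    (hM : ∀ i j, M i j = (adjoint (A i)).comp (A j) + (adjoint (B j)).comp (B i))
    (Mcal : (Fin n → EuclideanSpace ℂ (Fin dF)) → (Fin n → EuclideanSpace ℂ (Fin dF)))
    (hMcal : ∀ X i, Mcal X i = ∑ j, M i j (X j)) :
    (∀ (u : EuclideanSpace ℂ (Fin dF)) (ζ : Fin n → ℂ),
      (∑ i, (inner ℂ (ζ i • u) (Mcal (fun j => ζ j • u) i) : ℂ))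
        = ((‖(∑ j, ζ j • A j) u‖ ^ 2
            + ‖(∑ j, (starRingEnd ℂ) (ζ j) • B j) u‖ ^ 2 : ℝ) : ℂ)) ∧
    (∀ (u : EuclideanSpace ℂ (Fin dF)) (ξ : Fin n → ℝ),
      (∑ i, (inner ℂ ((ξ i : ℂ) • u) (Mcal (fun j => (ξ j : ℂ) • u) i) : ℂ))
        = ((‖(∑ j, (ξ j : ℂ) • A j) u‖ ^ 2
            + ‖(∑ j, (ξ j : ℂ) • B j) u‖ ^ 2 : ℝ) : ℂ)) := by

  have key : ∀ (u : EuclideanSpace ℂ (Fin dF)) (ζ : Fin n → ℂ),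
      (∑ i, (inner ℂ (ζ i • u) (Mcal (fun j => ζ j • u) i) : ℂ))
        = ((‖(∑ j, ζ j • A j) u‖ ^ 2
            + ‖(∑ j, (starRingEnd ℂ) (ζ j) • B j) u‖ ^ 2 : ℝ) : ℂ) := by
    intro u ζ
    have hA : ((‖(∑ j, ζ j • A j) u‖ ^ 2 : ℝ) : ℂ)
        = ∑ i, ∑ j, (starRingEnd ℂ) (ζ i) * (ζ j * inner ℂ (A i u) (A j u)) := by
      have eA : (inner ℂ ((∑ j, ζ j • A j) u) ((∑ j, ζ j • A j) u) : ℂ)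
          = ((‖(∑ j, ζ j • A j) u‖ ^ 2 : ℝ) : ℂ) := by
        exact_mod_cast inner_self_eq_norm_sq_to_K (𝕜 := ℂ) _
      rw [← eA]
      simp only [LinearMap.sum_apply, LinearMap.smul_apply, sum_inner, inner_sum,
        inner_smul_left, inner_smul_right, Finset.mul_sum]
      rw [Finset.sum_comm]
      exact Finset.sum_congr rfl fun i _ => Finset.sum_congr rfl fun j _ => by
        simp only [Complex.conj_conj, mul_comm, mul_left_comm]
    have hB : ((‖(∑ j, (starRingEnd ℂ) (ζ j) • B j) u‖ ^ 2 : ℝ) : ℂ)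
        = ∑ i, ∑ j, ζ i * ((starRingEnd ℂ) (ζ j) * inner ℂ (B i u) (B j u)) := by
      have eB : (inner ℂ ((∑ j, (starRingEnd ℂ) (ζ j) • B j) u)
            ((∑ j, (starRingEnd ℂ) (ζ j) • B j) u) : ℂ)
          = ((‖(∑ j, (starRingEnd ℂ) (ζ j) • B j) u‖ ^ 2 : ℝ) : ℂ) := by
        exact_mod_cast inner_self_eq_norm_sq_to_K (𝕜 := ℂ) _
      rw [← eB]
      simp only [LinearMap.sum_apply, LinearMap.smul_apply, sum_inner, inner_sum,
        inner_smul_left, inner_smul_right, Finset.mul_sum]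
      rw [Finset.sum_comm]
      exact Finset.sum_congr rfl fun i _ => Finset.sum_congr rfl fun j _ => by
        simp only [Complex.conj_conj, mul_comm, mul_left_comm]
    have hswap : (∑ i, ∑ j, ζ i * ((starRingEnd ℂ) (ζ j) * inner ℂ (B i u) (B j u)))
        = ∑ i, ∑ j, (starRingEnd ℂ) (ζ i) * (ζ j * (inner ℂ (B j u) (B i u) : ℂ)) := by
      rw [Finset.sum_comm]
      exact Finset.sum_congr rfl fun i _ => Finset.sum_congr rfl fun j _ => by ring
    rw [Complex.ofReal_add, hA, hB, hswap, ← Finset.sum_add_distrib]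
    refine Finset.sum_congr rfl fun i _ => ?_
    rw [hMcal]
    simp only [hM, LinearMap.add_apply, LinearMap.coe_comp, Function.comp_apply,
      map_smul, inner_sum, inner_add_right, inner_smul_left, inner_smul_right,
      LinearMap.adjoint_inner_right, Finset.sum_add_distrib, Finset.mul_sum, mul_add]
    refine congrArg₂ (· + ·) ?_ ?_ <;>
      exact Finset.sum_congr rfl fun j _ => by ring
  refine ⟨key, fun u ξ => ?_⟩
  have := key u (fun j => (ξ j : ℂ))
  simpa [Complex.conj_ofReal] using this
end

section
/- If the Laplace coefficient map 𝕄 is positive semi-definite, then the operator 𝒟_M with symbol 𝔻_M(ξ)u = √𝕄 (u ⊗ ξ) satisfies |𝔻_M(ξ)u|² = |𝔻(ξ)u|² for all ξ ∈ ℝⁿ and u ∈ F. Consequently 𝒟_M is elliptic if and only if 𝒟 is elliptic. -/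
open LinearMap Finset

/-- if `𝕄` is positive semi-definite with (self-adjoint) square root
`√𝕄`, then the operator `𝒟_M` with symbol `𝔻_M(ξ)u = √𝕄(u ⊗ ξ)` satisfies
`|𝔻_M(ξ)u|² = |𝔻(ξ)u|²` for all `ξ, u`; consequently `𝒟_M` is elliptic iff `𝒟`
is elliptic. -/
theorem sqrt_laplace_symbol_norm_and_ellipticity
    (n dF dG dE : ℕ)
    (A : Fin n → EuclideanSpace ℝ (Fin dF) →ₗ[ℝ] EuclideanSpace ℝ (Fin dG))
    (B : Fin n → EuclideanSpace ℝ (Fin dF) →ₗ[ℝ] EuclideanSpace ℝ (Fin dE))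
    (M : Fin n → Fin n →
      (EuclideanSpace ℝ (Fin dF) →ₗ[ℝ] EuclideanSpace ℝ (Fin dF)))
    (hM : ∀ i j, M i j = (adjoint (A i)).comp (A j) + (adjoint (B j)).comp (B i))
    (Mcal : (Fin n → EuclideanSpace ℝ (Fin dF)) → (Fin n → EuclideanSpace ℝ (Fin dF)))
    (hMcal : ∀ X i, Mcal X i = ∑ j, M i j (X j))
    -- `𝕄` is positive semi-definite:
    (hpsd : ∀ X : Fin n → EuclideanSpace ℝ (Fin dF),
      0 ≤ ∑ i, (inner ℝ (X i) (Mcal X i) : ℝ))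
    -- `√𝕄`: a self-adjoint square root of `𝕄`:
    (sqrtM : (Fin n → EuclideanSpace ℝ (Fin dF)) →ₗ[ℝ] (Fin n → EuclideanSpace ℝ (Fin dF)))
    (hsq : ∀ X, sqrtM (sqrtM X) = Mcal X)
    (hsa : ∀ X Y : Fin n → EuclideanSpace ℝ (Fin dF),
      (∑ i, (inner ℝ (sqrtM X i) (Y i) : ℝ)) = ∑ i, (inner ℝ (X i) (sqrtM Y i) : ℝ)) :
    (∀ (ξ : Fin n → ℝ) (u : EuclideanSpace ℝ (Fin dF)),
      (∑ i, ‖sqrtM (fun j => ξ j • u) i‖ ^ 2)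
        = ‖(∑ j, ξ j • A j) u‖ ^ 2 + ‖(∑ j, ξ j • B j) u‖ ^ 2) ∧
    ((∀ ξ : Fin n → ℝ, ξ ≠ 0 →
        Function.Injective (fun u : EuclideanSpace ℝ (Fin dF) =>
          sqrtM (fun j => ξ j • u)))
      ↔ (∀ ξ : Fin n → ℝ, ξ ≠ 0 →
          Function.Injective ((∑ j, ξ j • A j).prod (∑ j, ξ j • B j)))) := by

  have key : ∀ (ξ : Fin n → ℝ) (u : EuclideanSpace ℝ (Fin dF)),
      (∑ i, ‖sqrtM (fun j => ξ j • u) i‖ ^ 2)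
        = ‖(∑ j, ξ j • A j) u‖ ^ 2 + ‖(∑ j, ξ j • B j) u‖ ^ 2 := by
    intro ξ u
    set X : Fin n → EuclideanSpace ℝ (Fin dF) := fun j => ξ j • u with hX
    have h1 : (∑ i, ‖sqrtM X i‖ ^ 2) = ∑ i, (inner ℝ (X i) (Mcal X i) : ℝ) := by
      calc ∑ i, ‖sqrtM X i‖ ^ 2 = ∑ i, (inner ℝ (sqrtM X i) (sqrtM X i) : ℝ) :=
            Finset.sum_congr rfl fun i _ => (real_inner_self_eq_norm_sq _).symm
        _ = ∑ i, (inner ℝ (X i) (sqrtM (sqrtM X) i) : ℝ) := hsa X (sqrtM X)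
        _ = ∑ i, (inner ℝ (X i) (Mcal X i) : ℝ) := by rw [hsq]
    have h2 : ∀ i j, (inner ℝ u (M i j u) : ℝ)
        = inner ℝ (A i u) (A j u) + inner ℝ (B i u) (B j u) := by
      intro i j
      rw [hM]
      simp only [LinearMap.add_apply, LinearMap.comp_apply, inner_add_right,
        LinearMap.adjoint_inner_right]
      rw [real_inner_comm (B j u) (B i u)]
    have hL : ∑ i, (inner ℝ (X i) (Mcal X i) : ℝ)
        = ∑ i, ∑ j, ξ i * (ξ j * inner ℝ u (M i j u)) := by
      refine Finset.sum_congr rfl fun i _ => ?_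
      rw [hMcal]
      simp only [hX]
      rw [real_inner_smul_left, inner_sum, Finset.mul_sum]
      refine Finset.sum_congr rfl fun j _ => ?_
      rw [map_smul, real_inner_smul_right]
    have hRA : ‖(∑ j, ξ j • A j) u‖ ^ 2
        = ∑ i, ∑ j, ξ i * (ξ j * inner ℝ (A i u) (A j u)) := by
      rw [← real_inner_self_eq_norm_sq]
      simp only [LinearMap.sum_apply, LinearMap.smul_apply, sum_inner,
        real_inner_smul_left]
      refine Finset.sum_congr rfl fun i _ => ?_
      rw [inner_sum, Finset.mul_sum]
      refine Finset.sum_congr rfl fun j _ => ?_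
      rw [real_inner_smul_right]
    have hRB : ‖(∑ j, ξ j • B j) u‖ ^ 2
        = ∑ i, ∑ j, ξ i * (ξ j * inner ℝ (B i u) (B j u)) := by
      rw [← real_inner_self_eq_norm_sq]
      simp only [LinearMap.sum_apply, LinearMap.smul_apply, sum_inner,
        real_inner_smul_left]
      refine Finset.sum_congr rfl fun i _ => ?_
      rw [inner_sum, Finset.mul_sum]
      refine Finset.sum_congr rfl fun j _ => ?_
      rw [real_inner_smul_right]
    rw [h1, hL, hRA, hRB, ← Finset.sum_add_distrib]
    refine Finset.sum_congr rfl fun i _ => ?_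
    rw [← Finset.sum_add_distrib]
    refine Finset.sum_congr rfl fun j _ => ?_
    rw [h2]
    ring
  refine ⟨key, ?_⟩
  have hzero : ∀ (ξ : Fin n → ℝ) (u : EuclideanSpace ℝ (Fin dF)),
      sqrtM (fun j => ξ j • u) = 0 ↔
        ((∑ j, ξ j • A j).prod (∑ j, ξ j • B j)) u = 0 := by
    intro ξ u
    have hk := key ξ u
    constructor
    · intro h
      rw [h] at hk
      simp only [Pi.zero_apply, norm_zero] at hk
      have h0 : (0:ℝ) = ‖(∑ j, ξ j • A j) u‖ ^ 2 + ‖(∑ j, ξ j • B j) u‖ ^ 2 := by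
        simpa using hk
      have hA : ‖(∑ j, ξ j • A j) u‖ ^ 2 = 0 := by nlinarith [sq_nonneg ‖(∑ j, ξ j • A j) u‖, sq_nonneg ‖(∑ j, ξ j • B j) u‖]
      have hB : ‖(∑ j, ξ j • B j) u‖ ^ 2 = 0 := by nlinarith [sq_nonneg ‖(∑ j, ξ j • A j) u‖, sq_nonneg ‖(∑ j, ξ j • B j) u‖]
      have hA' : (∑ j, ξ j • A j) u = 0 := by
        rw [pow_eq_zero_iff (by norm_num), norm_eq_zero] at hA; exact hA
      have hB' : (∑ j, ξ j • B j) u = 0 := by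
        rw [pow_eq_zero_iff (by norm_num), norm_eq_zero] at hB; exact hB
      exact Prod.ext hA' hB'
    · intro h
      simp only [LinearMap.prod_apply, Pi.prod, Function.prod, Prod.mk_eq_zero] at h
      rw [h.1, h.2] at hk
      simp only [norm_zero] at hk
      have hk' : ∑ i, ‖sqrtM (fun j => ξ j • u) i‖ ^ 2 = 0 := by simpa using hk
      funext i
      have h3 := Finset.sum_eq_zero_iff_of_nonneg (fun i _ => sq_nonneg _) |>.mp hk' i (Finset.mem_univ i)
      rw [pow_eq_zero_iff (by norm_num : (2:ℕ) ≠ 0), norm_eq_zero] at h3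
      show sqrtM (fun j => ξ j • u) i = 0
      exact h3
  constructor
  · intro h ξ hξ
    rw [injective_iff_map_eq_zero]
    intro u hu
    have hinj := h ξ hξ
    have h0 : sqrtM (fun j => ξ j • u) = 0 := (hzero ξ u).mpr hu
    have h00 : sqrtM (fun j => ξ j • (0 : EuclideanSpace ℝ (Fin dF))) = 0 := by
      have : (fun j => ξ j • (0 : EuclideanSpace ℝ (Fin dF))) = 0 := by
        funext j; simp
      rw [this, map_zero]
    exact hinj (h0.trans h00.symm)
  · intro h ξ hξ
    intro u v huv
    have hinj := h ξ hξ
    have hsub : sqrtM (fun j => ξ j • (u - v)) = 0 := by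
      have hfun : (fun j => ξ j • (u - v))
          = (fun j => ξ j • u) - (fun j => ξ j • v) := by
        funext j; simp [smul_sub]
      rw [hfun, map_sub]
      simp only at huv
      rw [huv, sub_self]
    have hp := (hzero ξ (u - v)).mp hsub
    have h4 : ((∑ j, ξ j • A j).prod (∑ j, ξ j • B j)) (u - v)
        = ((∑ j, ξ j • A j).prod (∑ j, ξ j • B j)) 0 := by
      rw [hp, map_zero]
    have h5 := hinj h4
    exact sub_eq_zero.mp h5
end

section
/- For the symmetric gradient in ℝ², with symbol 𝔻(ξ) = [[ξ₁, 0], [ξ₂/2, ξ₁/2], [0, ξ₂]] : ℝ² → ℝ³, the matrix 𝔻(ξ)𝔻(ξ)* has no nontrivial subspace of ℝ³ that is invariant for all ξ ∈ ℝ². Consequently, the symmetric gradient admits no nontrivial orthogonal decomposition 𝒟 = 𝒜 ⊕ ℬ with 𝒜 ∘ ℬ* = 0. -/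
open Matrix

/-- for the symmetric gradient in ℝ² with symbol
`𝔻(ξ) = [[ξ₁,0],[ξ₂/2,ξ₁/2],[0,ξ₂]]`, the matrices `𝔻(ξ)𝔻(ξ)ᵀ` admit no nontrivial
common invariant subspace of ℝ³; consequently there is no nontrivial orthogonal
decomposition (orthogonal projection `P ≠ 0, 1`) with `𝒜 ∘ ℬ* = (1−P)𝔻(ξ)𝔻(ξ)ᵀP = 0`. -/
theorem symmetric_gradient_no_invariant_subspace
    (D : (Fin 2 → ℝ) → Matrix (Fin 3) (Fin 2) ℝ)
    (hD : ∀ ξ, D ξ = !![ξ 0, 0; ξ 1 / 2, ξ 0 / 2; 0, ξ 1]) :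
    (∀ V : Submodule ℝ (Fin 3 → ℝ),
      (∀ ξ : Fin 2 → ℝ, ∀ v ∈ V, (D ξ * (D ξ)ᵀ).mulVec v ∈ V) → V = ⊥ ∨ V = ⊤) ∧
    (∀ P : Matrix (Fin 3) (Fin 3) ℝ, P * P = P → Pᵀ = P →
      (∀ ξ : Fin 2 → ℝ, (1 - P) * (D ξ * (D ξ)ᵀ) * P = 0) → P = 0 ∨ P = 1) := by
  -- mulVec of the three key matrices
  have hA : ∀ v : Fin 3 → ℝ, (D ![1,0] * (D ![1,0])ᵀ).mulVec v = ![v 0, v 1 / 4, 0] := by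
    intro v; rw [hD]; funext i
    fin_cases i <;>
      simp [Matrix.mulVec, Matrix.mul_apply, dotProduct, Fin.sum_univ_succ] <;> ring
  have hB : ∀ v : Fin 3 → ℝ, (D ![0,1] * (D ![0,1])ᵀ).mulVec v = ![0, v 1 / 4, v 2] := by
    intro v; rw [hD]; funext i
    fin_cases i <;>
      simp [Matrix.mulVec, Matrix.mul_apply, dotProduct, Fin.sum_univ_succ] <;> ring
  have hC : ∀ v : Fin 3 → ℝ, (D ![1,1] * (D ![1,1])ᵀ).mulVec v =
      ![v 0 + v 1 / 2, v 0 / 2 + v 1 / 2 + v 2 / 2, v 1 / 2 + v 2] := by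
    intro v; rw [hD]; funext i
    fin_cases i <;>
      simp [Matrix.mulVec, Matrix.mul_apply, dotProduct, Fin.sum_univ_succ] <;> ring
  have part1 : ∀ V : Submodule ℝ (Fin 3 → ℝ),
      (∀ ξ : Fin 2 → ℝ, ∀ v ∈ V, (D ξ * (D ξ)ᵀ).mulVec v ∈ V) → V = ⊥ ∨ V = ⊤ := by
    intro V hV
    by_cases hbot : V = ⊥
    · exact Or.inl hbot
    right
    obtain ⟨v, hv, hvne⟩ := (Submodule.ne_bot_iff V).mp hbot
    have hAV : ∀ w ∈ V, (![w 0, w 1 / 4, 0] : Fin 3 → ℝ) ∈ V := by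
      intro w hw; have := hV ![1,0] w hw; rwa [hA] at this
    have hBV : ∀ w ∈ V, (![0, w 1 / 4, w 2] : Fin 3 → ℝ) ∈ V := by
      intro w hw; have := hV ![0,1] w hw; rwa [hB] at this
    have hCV : ∀ w ∈ V, (![w 0 + w 1 / 2, w 0 / 2 + w 1 / 2 + w 2 / 2, w 1 / 2 + w 2] :
        Fin 3 → ℝ) ∈ V := by
      intro w hw; have := hV ![1,1] w hw; rwa [hC] at this
    -- extract coordinate pieces
    have h0 : ∀ w ∈ V, (![w 0, 0, 0] : Fin 3 → ℝ) ∈ V := by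
      intro w hw
      have h1 := hAV w hw
      have h2 := hAV _ h1
      have key : (![w 0, 0, 0] : Fin 3 → ℝ) =
          (1/3 : ℝ) • ((4 : ℝ) • (![(![w 0, w 1 / 4, 0] : Fin 3 → ℝ) 0,
            (![w 0, w 1 / 4, 0] : Fin 3 → ℝ) 1 / 4, 0] : Fin 3 → ℝ)
            - ![w 0, w 1 / 4, 0]) := by
        funext i; fin_cases i <;> simp <;> ring
      rw [key]
      exact V.smul_mem _ (V.sub_mem (V.smul_mem _ h2) h1)
    have h1 : ∀ w ∈ V, (![0, w 1, 0] : Fin 3 → ℝ) ∈ V := by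
      intro w hw
      have hA1 := hAV w hw
      have hz := h0 w hw
      have key : (![0, w 1, 0] : Fin 3 → ℝ) =
          (4 : ℝ) • ((![w 0, w 1 / 4, 0] : Fin 3 → ℝ) - ![w 0, 0, 0]) := by
        funext i; fin_cases i <;> simp <;> ring
      rw [key]
      exact V.smul_mem _ (V.sub_mem hA1 hz)
    have h2 : ∀ w ∈ V, (![0, 0, w 2] : Fin 3 → ℝ) ∈ V := by
      intro w hw
      have hB1 := hBV w hw
      have h1' := h1 w hw
      have key : (![0, 0, w 2] : Fin 3 → ℝ) =
          (![0, w 1 / 4, w 2] : Fin 3 → ℝ) - (1/4 : ℝ) • ![0, w 1, 0] := by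
        funext i; fin_cases i <;> simp <;> ring
      rw [key]
      exact V.sub_mem hB1 (V.smul_mem _ h1')
    -- if e₁ ∈ V then V = ⊤
    have he1top : (![0, 1, 0] : Fin 3 → ℝ) ∈ V → V = ⊤ := by
      intro he1
      have hc := hCV _ he1
      -- C e₁ = (1/2, 1/2, 1/2)
      have hc' : (![1/2, 1/2, 1/2] : Fin 3 → ℝ) ∈ V := by
        have key : (![1/2, 1/2, 1/2] : Fin 3 → ℝ) =
            ![(0:ℝ) + 1/2, 0/2 + 1/2 + 0/2, 1/2 + 0] := by
          funext i; fin_cases i <;> norm_num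
        rw [key]
        convert hc using 2 <;> simp
      have hw : (![1, 0, 1] : Fin 3 → ℝ) ∈ V := by
        have key : (![1, 0, 1] : Fin 3 → ℝ) =
            (2 : ℝ) • (![1/2, 1/2, 1/2] : Fin 3 → ℝ) - ![0, 1, 0] := by
          funext i; fin_cases i <;> norm_num
        rw [key]
        exact V.sub_mem (V.smul_mem _ hc') he1
      have he0 : (![1, 0, 0] : Fin 3 → ℝ) ∈ V := by
        have := h0 _ hw
        simpa using this
      have he2 : (![0, 0, 1] : Fin 3 → ℝ) ∈ V := by
        have := h2 _ hw
        simpa using this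
      rw [Submodule.eq_top_iff']
      intro x
      have hx : x = x 0 • (![1,0,0] : Fin 3 → ℝ) + x 1 • ![0,1,0] + x 2 • ![0,0,1] := by
        funext i; fin_cases i <;> simp
      rw [hx]
      exact V.add_mem (V.add_mem (V.smul_mem _ he0) (V.smul_mem _ he1)) (V.smul_mem _ he2)
    -- produce e₁ from any nonzero vector
    have hne : v 0 ≠ 0 ∨ v 1 ≠ 0 ∨ v 2 ≠ 0 := by
      by_contra h
      push_neg at h
      apply hvne
      funext i; fin_cases i <;> simp [h.1, h.2.1, h.2.2]
    -- helper: from e₀ ∈ V get e₁ ∈ V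
    have he0e1 : (![1, 0, 0] : Fin 3 → ℝ) ∈ V → (![0, 1, 0] : Fin 3 → ℝ) ∈ V := by
      intro he0
      have hc := hCV _ he0
      have key : (![0, 1, 0] : Fin 3 → ℝ) =
          (2:ℝ) • ((![((![1,0,0] : Fin 3 → ℝ) 0 + (![1,0,0] : Fin 3 → ℝ) 1 / 2),
            ((![1,0,0] : Fin 3 → ℝ) 0 / 2 + (![1,0,0] : Fin 3 → ℝ) 1 / 2 +
              (![1,0,0] : Fin 3 → ℝ) 2 / 2),
            ((![1,0,0] : Fin 3 → ℝ) 1 / 2 + (![1,0,0] : Fin 3 → ℝ) 2)] : Fin 3 → ℝ)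
            - ![1,0,0]) := by
        funext i; fin_cases i <;> norm_num [Matrix.cons_val_two, Matrix.tail_cons, Matrix.head_cons]
      rw [key]
      exact V.smul_mem _ (V.sub_mem hc he0)
    have he2e1 : (![0, 0, 1] : Fin 3 → ℝ) ∈ V → (![0, 1, 0] : Fin 3 → ℝ) ∈ V := by
      intro he2
      have hc := hCV _ he2
      have key : (![0, 1, 0] : Fin 3 → ℝ) =
          (2:ℝ) • ((![((![0,0,1] : Fin 3 → ℝ) 0 + (![0,0,1] : Fin 3 → ℝ) 1 / 2),
            ((![0,0,1] : Fin 3 → ℝ) 0 / 2 + (![0,0,1] : Fin 3 → ℝ) 1 / 2 +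
              (![0,0,1] : Fin 3 → ℝ) 2 / 2),
            ((![0,0,1] : Fin 3 → ℝ) 1 / 2 + (![0,0,1] : Fin 3 → ℝ) 2)] : Fin 3 → ℝ)
            - ![0,0,1]) := by
        funext i; fin_cases i <;> norm_num [Matrix.cons_val_two, Matrix.tail_cons, Matrix.head_cons]
      rw [key]
      exact V.smul_mem _ (V.sub_mem hc he2)
    rcases hne with h | h | h
    · apply he1top
      apply he0e1
      have := V.smul_mem (v 0)⁻¹ (h0 v hv)
      have key : ((v 0)⁻¹ • (![v 0, 0, 0] : Fin 3 → ℝ)) = ![1, 0, 0] := by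
        funext i; fin_cases i <;> simp [inv_mul_cancel₀ h]
      rwa [key] at this
    · apply he1top
      have := V.smul_mem (v 1)⁻¹ (h1 v hv)
      have key : ((v 1)⁻¹ • (![0, v 1, 0] : Fin 3 → ℝ)) = ![0, 1, 0] := by
        funext i; fin_cases i <;> simp [inv_mul_cancel₀ h]
      rwa [key] at this
    · apply he1top
      apply he2e1
      have := V.smul_mem (v 2)⁻¹ (h2 v hv)
      have key : ((v 2)⁻¹ • (![0, 0, v 2] : Fin 3 → ℝ)) = ![0, 0, 1] := by
        funext i; fin_cases i <;> simp [inv_mul_cancel₀ h]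
      rwa [key] at this
  refine ⟨part1, ?_⟩
  intro P hP2 hPT hPM
  by_cases hP0 : P = 0
  · exact Or.inl hP0
  right
  set V : Submodule ℝ (Fin 3 → ℝ) := LinearMap.range P.mulVecLin with hVdef
  have hinv : ∀ ξ : Fin 2 → ℝ, ∀ v ∈ V, (D ξ * (D ξ)ᵀ).mulVec v ∈ V := by
    intro ξ v hvV
    obtain ⟨w, hw⟩ := hvV
    have hMP : (D ξ * (D ξ)ᵀ) * P = P * ((D ξ * (D ξ)ᵀ) * P) := by
      have h := hPM ξ
      rwa [mul_assoc, sub_mul, one_mul, sub_eq_zero] at h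
    refine ⟨((D ξ * (D ξ)ᵀ) * P).mulVec w, ?_⟩
    simp only [Matrix.mulVecLin_apply] at hw ⊢
    calc P *ᵥ (D ξ * (D ξ)ᵀ * P) *ᵥ w = (P * (D ξ * (D ξ)ᵀ * P)) *ᵥ w := by
          rw [Matrix.mulVec_mulVec]
      _ = (D ξ * (D ξ)ᵀ * P) *ᵥ w := by rw [← hMP]
      _ = (D ξ * (D ξ)ᵀ) *ᵥ (P *ᵥ w) := by rw [Matrix.mulVec_mulVec]
      _ = (D ξ * (D ξ)ᵀ) *ᵥ v := by rw [hw]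
  rcases part1 V hinv with hV | hV
  · exfalso
    apply hP0
    ext i j
    have : P.mulVec (Pi.single j 1) ∈ V := ⟨Pi.single j 1, rfl⟩
    rw [hV, Submodule.mem_bot] at this
    have := congrFun this i
    simpa using this
  · ext i j
    have : (Pi.single j 1 : Fin 3 → ℝ) ∈ V := hV ▸ Submodule.mem_top
    obtain ⟨w, hw⟩ := this
    simp only [Matrix.mulVecLin_apply] at hw
    have hPv : P.mulVec (Pi.single j 1) = Pi.single j 1 := by
      rw [← hw, Matrix.mulVec_mulVec, hP2]
    have := congrFun hPv i
    simp only [Matrix.mulVec_single, mul_one, MulOpposite.op_one, one_smul, Matrix.col_apply] at this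
    rw [this]
    simp [Matrix.one_apply, Pi.single_apply, eq_comm]
end

section
/- (Construction of left inverse symbols) Let 𝔻(ζ) be an N×m complex-matrix-valued homogeneous linear function of ζ that is ℂ-elliptic. Then there exists k < ∞ such that for every multi-index α with |α| > n(k−1), there exists a matrix-valued polynomial ℚ_α(ζ) ∈ L(ℂᴺ, ℂᵐ), homogeneous of degree |α| − 1, with ℚ_α(ζ) 𝔻(ζ) = ζ^α · id on ℂᵐ for all ζ ∈ ℂⁿ. -/
open Matrix Finset MvPolynomial

private lemma homogComp_mul_homog {n : ℕ} {e : ℕ} {ℓ : MvPolynomial (Fin n) ℂ}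
    (hℓ : ℓ.IsHomogeneous e) (d : ℕ) (q : MvPolynomial (Fin n) ℂ) :
    homogeneousComponent (d + e) (q * ℓ) = homogeneousComponent d q * ℓ := by
  induction q using MvPolynomial.induction_on' with
  | add p r hp hr => rw [add_mul, map_add, hp, hr, map_add, add_mul]
  | monomial u a =>
    by_cases h : u.degree = d
    · have h1 : (monomial u a).IsHomogeneous d := isHomogeneous_monomial a h
      have h2 : ((monomial u a) * ℓ).IsHomogeneous (d + e) := h1.mul hℓ
      rw [homogeneousComponent_of_mem ((mem_homogeneousSubmodule _ _).mpr h2),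
        homogeneousComponent_of_mem ((mem_homogeneousSubmodule _ _).mpr h1), if_pos rfl,
        if_pos rfl]
    · have h1 : (monomial u a).IsHomogeneous u.degree := isHomogeneous_monomial a rfl
      have h2 := h1.mul hℓ
      rw [homogeneousComponent_of_mem ((mem_homogeneousSubmodule _ _).mpr h2),
        homogeneousComponent_of_mem ((mem_homogeneousSubmodule _ _).mpr h1),
        if_neg (by omega), if_neg (fun hh => h hh.symm), zero_mul]

private lemma det_isHomogeneous {n m : ℕ} (M : Matrix (Fin m) (Fin m) (MvPolynomial (Fin n) ℂ))
    (d : Fin m → ℕ) (h : ∀ i j, (M i j).IsHomogeneous (d i)) :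
    M.det.IsHomogeneous (∑ i, d i) := by
  rw [Matrix.det_apply]
  apply MvPolynomial.IsHomogeneous.sum
  intro σ _
  have hp : (∏ i, M (σ i) i).IsHomogeneous (∑ i, d i) := by
    have := MvPolynomial.IsHomogeneous.prod Finset.univ (fun i => M (σ i) i)
      (fun i => d (σ i)) (fun i _ => h (σ i) i)
    rwa [Equiv.sum_comp σ d] at this
  rcases Int.units_eq_one_or (Equiv.Perm.sign σ) with hs | hs <;> rw [hs]
  · simpa using hp
  · have : ((-1 : ℤˣ) • ∏ i, M (σ i) i) = -(∏ i, M (σ i) i) := by simp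
    rw [this, neg_eq_neg_one_mul]
    simpa using (MvPolynomial.IsHomogeneous.C_mul hp (-1))

private lemma adj_isHomogeneous {n m : ℕ} (M : Matrix (Fin m) (Fin m) (MvPolynomial (Fin n) ℂ))
    (h : ∀ i j, (M i j).IsHomogeneous 1) (a a' : Fin m) :
    ((Matrix.adjugate M) a a').IsHomogeneous (m - 1) := by
  classical
  rw [Matrix.adjugate_apply]
  have hsum : ∑ r : Fin m, (if r = a' then (0:ℕ) else 1) = m - 1 := by
    rw [← Finset.sum_erase_add _ _ (mem_univ a'), if_pos rfl, add_zero,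
      Finset.sum_congr rfl (fun r hr => if_neg (Finset.ne_of_mem_erase hr))]
    simp [Finset.card_erase_of_mem]
  rw [← hsum]
  apply det_isHomogeneous
  intro r l
  rw [Matrix.updateRow_apply]
  by_cases hr : r = a'
  · rw [if_pos hr, if_pos hr]
    rcases eq_or_ne l a with hl | hl
    · rw [hl, Pi.single_eq_same]; exact isHomogeneous_one _ _
    · rw [Pi.single_eq_of_ne hl]; exact isHomogeneous_zero _ _ _
  · rw [if_neg hr, if_neg hr]; exact h r l

private lemma exists_det_ne {N m : ℕ} (A : Matrix (Fin N) (Fin m) ℂ)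
    (h : Function.Injective A.mulVec) :
    ∃ g : Fin m → Fin N, (A.submatrix g id).det ≠ 0 := by
  classical
  have hinj : Function.Injective A.mulVecLin := by rwa [Matrix.coe_mulVecLin]
  have hrank : A.rank = m := by
    rw [Matrix.rank, LinearMap.finrank_range_of_inj hinj,
      Module.finrank_fintype_fun_eq_card, Fintype.card_fin]
  have htop : Submodule.span ℂ (Set.range A) = ⊤ := by
    apply Submodule.eq_top_of_finrank_eq
    show Module.finrank ℂ (Submodule.span ℂ (Set.range A.row)) = _
    rw [← Matrix.rank_eq_finrank_span_row, hrank,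
      Module.finrank_fintype_fun_eq_card, Fintype.card_fin]
  obtain ⟨t, hts, hsp, hli⟩ := exists_linearIndependent ℂ (Set.range A)
  have htfin : t.Finite := (Set.finite_range A).subset hts
  haveI : Fintype t := htfin.fintype
  let b : Module.Basis t ℂ (Fin m → ℂ) := Module.Basis.mk hli (by rw [Subtype.range_coe, hsp, htop])
  have hcard : Fintype.card (Fin m) = Fintype.card t := by
    rw [Fintype.card_fin, ← Module.finrank_eq_card_basis b,
      Module.finrank_fintype_fun_eq_card, Fintype.card_fin]
  let e : Fin m ≃ t := Fintype.equivOfCardEq hcard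
  have hchoose : ∀ i : Fin m, ∃ i0 : Fin N, A i0 = (e i : Fin m → ℂ) := fun i => hts (e i).2
  choose g hg using hchoose
  refine ⟨g, ?_⟩
  have hrows : (fun i => A.submatrix g id i) = (fun x : t => (x : Fin m → ℂ)) ∘ e := by
    funext i; exact hg i
  have hli2 : LinearIndependent ℂ (fun i => A.submatrix g id i) := by
    rw [hrows]; exact hli.comp e e.injective
  exact ((Matrix.isUnit_iff_isUnit_det _).mp
    (Matrix.linearIndependent_rows_iff_isUnit.mp hli2)).ne_zero

/-- construction of left inverse symbols: if `𝔻(ζ) = ∑ ζⱼ Dⱼ` is an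
`N×m` homogeneous linear symbol that is ℂ-elliptic, then there exists `k < ∞` such
that for every multi-index `α` with `|α| > n(k−1)` there is a matrix of polynomials
`ℚ_α(ζ)`, each entry homogeneous of degree `|α| − 1`, with
`ℚ_α(ζ) 𝔻(ζ) = ζ^α · id` on `ℂᵐ` for all `ζ ∈ ℂⁿ`. -/
theorem left_inverse_symbols_of_C_elliptic
    (n N m : ℕ) (hm : m ≤ N)
    (D : Fin n → Matrix (Fin N) (Fin m) ℂ)
    (hell : ∀ ζ : Fin n → ℂ, ζ ≠ 0 → Function.Injective (∑ j, ζ j • D j).mulVec) :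
    ∃ k : ℕ, ∀ α : Fin n → ℕ, n * (k - 1) < ∑ j, α j →
      ∃ Q : Matrix (Fin m) (Fin N) (MvPolynomial (Fin n) ℂ),
        (∀ i j, (Q i j).IsHomogeneous ((∑ j, α j) - 1)) ∧
        (∀ ζ : Fin n → ℂ,
          Q.map (MvPolynomial.eval ζ) * (∑ j, ζ j • D j)
            = (∏ j, ζ j ^ α j) • (1 : Matrix (Fin m) (Fin m) ℂ)) := by
  classical
  -- the symbol as a polynomial matrix
  set P : Matrix (Fin N) (Fin m) (MvPolynomial (Fin n) ℂ) :=
    Matrix.of fun i l => ∑ j, MvPolynomial.X j * MvPolynomial.C (D j i l) with hP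
  have hPev : ∀ ζ : Fin n → ℂ, P.map (MvPolynomial.eval ζ) = ∑ j, ζ j • D j := by
    intro ζ
    ext i l
    simp [hP, Matrix.map_apply, Matrix.sum_apply]
  have hP1 : ∀ i l, (P i l).IsHomogeneous 1 := by
    intro i l
    rw [hP, Matrix.of_apply]
    apply MvPolynomial.IsHomogeneous.sum
    intro j _
    simpa using (isHomogeneous_X ℂ j).mul (isHomogeneous_C (Fin n) (D j i l))
  -- the minors
  set minor : (Fin m → Fin N) → MvPolynomial (Fin n) ℂ :=
    fun g => (P.submatrix g id).det with hminor_def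
  have hminor : ∀ g, (minor g).IsHomogeneous m := by
    intro g
    have := det_isHomogeneous (P.submatrix g id) (fun _ => 1) (fun i j => hP1 (g i) j)
    simpa using this
  set I : Ideal (MvPolynomial (Fin n) ℂ) := Ideal.span (Set.range minor) with hI
  -- Nullstellensatz
  have hrad : ∀ j : Fin n, MvPolynomial.X j ∈ I.radical := by
    intro j
    rw [← MvPolynomial.vanishingIdeal_zeroLocus_eq_radical (K := ℂ)]
    intro x hx
    rw [MvPolynomial.aeval_X]
    by_contra hxj
    have hxne : x ≠ 0 := fun h0 => hxj (by rw [h0]; rfl)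
    obtain ⟨g, hg⟩ := exists_det_ne (∑ j, x j • D j) (hell x hxne)
    apply hg
    have hmem : minor g ∈ I := Ideal.subset_span ⟨g, rfl⟩
    have := (MvPolynomial.mem_zeroLocus_iff.mp hx) (minor g) hmem
    rw [hminor_def, MvPolynomial.aeval_eq_eval] at this
    rw [RingHom.map_det] at this
    rwa [show (MvPolynomial.eval x).mapMatrix (P.submatrix g id)
      = ((∑ j, x j • D j).submatrix g id) by
        rw [RingHom.mapMatrix_apply, ← Matrix.submatrix_map, hPev x]] at this
  have hradev : ∀ j : Fin n, ∃ kj : ℕ, MvPolynomial.X j ^ kj ∈ I :=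
    fun j => Ideal.mem_radical_iff.mp (hrad j)
  choose κ hκ using hradev
  refine ⟨Finset.univ.sup κ + m + 1, ?_⟩
  intro α hα
  set k : ℕ := Finset.univ.sup κ + m + 1 with hk
  set d : ℕ := ∑ j, α j with hd
  -- pigeonhole
  have hex : ∃ j0, k ≤ α j0 := by
    by_contra hno
    push_neg at hno
    have hle : d ≤ n * (k - 1) := by
      calc d = ∑ j, α j := hd
        _ ≤ ∑ _j : Fin n, (k - 1) := Finset.sum_le_sum (fun j _ => by have := hno j; omega)
        _ = n * (k - 1) := by rw [Finset.sum_const, card_univ, Fintype.card_fin, smul_eq_mul]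
    omega
  obtain ⟨j0, hj0⟩ := hex
  have hdk : k ≤ d := le_trans hj0 (Finset.single_le_sum (f := α)
    (fun _ _ => Nat.zero_le _) (mem_univ j0))
  have hmk : m + 1 ≤ k := by omega
  -- X j0 ^ k ∈ I
  have hin : MvPolynomial.X j0 ^ k ∈ I := by
    have h1 := hκ j0
    have h2 : MvPolynomial.X (R := ℂ) j0 ^ k
        = MvPolynomial.X j0 ^ (k - κ j0) * MvPolynomial.X j0 ^ (κ j0) := by
      rw [← pow_add]
      congr 1
      have : κ j0 ≤ Finset.univ.sup κ := Finset.le_sup (mem_univ j0)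
      omega
    rw [h2]
    exact Ideal.mul_mem_left _ _ h1
  obtain ⟨c, hc⟩ := Ideal.mem_span_range_iff_exists_fun.mp hin
  -- homogenized coefficients
  set c' : (Fin m → Fin N) → MvPolynomial (Fin n) ℂ :=
    fun g => homogeneousComponent (k - m) (c g) with hc'
  have hc'h : ∀ g, (c' g).IsHomogeneous (k - m) :=
    fun g => homogeneousComponent_isHomogeneous _ _
  have hcomb : ∑ g, c' g * minor g = MvPolynomial.X j0 ^ k := by
    have h0 := congrArg (homogeneousComponent k) hc
    rw [map_sum] at h0
    have h1 : ∀ g ∈ Finset.univ, homogeneousComponent k (c g * minor g) = c' g * minor g := by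
      intro g _
      have h2 := homogComp_mul_homog (hminor g) (k - m) (c g)
      rwa [Nat.sub_add_cancel (show m ≤ k by omega)] at h2
    rw [Finset.sum_congr rfl h1] at h0
    have hx : (MvPolynomial.X (R := ℂ) j0 ^ k).IsHomogeneous k := by
      simpa using (isHomogeneous_X ℂ j0).pow k
    rw [h0, homogeneousComponent_of_mem ((mem_homogeneousSubmodule _ _).mpr hx), if_pos rfl]
  -- remaining monomial
  set T : MvPolynomial (Fin n) ℂ :=
    MvPolynomial.X j0 ^ (α j0 - k) * ∏ j ∈ Finset.univ.erase j0, MvPolynomial.X j ^ α j with hT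
  have hTh : T.IsHomogeneous (d - k) := by
    have h1 : (MvPolynomial.X (R := ℂ) j0 ^ (α j0 - k)).IsHomogeneous (α j0 - k) := by
      simpa using (isHomogeneous_X ℂ j0).pow (α j0 - k)
    have h2 : (∏ j ∈ Finset.univ.erase j0, MvPolynomial.X (R := ℂ) j ^ α j).IsHomogeneous
        (∑ j ∈ Finset.univ.erase j0, α j) :=
      MvPolynomial.IsHomogeneous.prod _ _ _ (fun j _ => by simpa using (isHomogeneous_X ℂ j).pow (α j))
    have h3 := h1.mul h2
    have h4 : α j0 - k + ∑ j ∈ Finset.univ.erase j0, α j = d - k := by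
      have := Finset.sum_erase_add Finset.univ α (mem_univ j0)
      omega
    rwa [h4] at h3
  have hTX : T * MvPolynomial.X j0 ^ k = ∏ j, MvPolynomial.X (R := ℂ) j ^ α j := by
    have h1 : MvPolynomial.X (R := ℂ) j0 ^ (α j0 - k) * MvPolynomial.X j0 ^ k
        = MvPolynomial.X j0 ^ α j0 := by
      rw [← pow_add]; congr 1; omega
    calc T * MvPolynomial.X j0 ^ k
        = (MvPolynomial.X j0 ^ (α j0 - k) * MvPolynomial.X j0 ^ k)
          * ∏ j ∈ Finset.univ.erase j0, MvPolynomial.X j ^ α j := by ring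
      _ = MvPolynomial.X j0 ^ α j0 * ∏ j ∈ Finset.univ.erase j0, MvPolynomial.X j ^ α j := by
          rw [h1]
      _ = ∏ j, MvPolynomial.X j ^ α j :=
          Finset.mul_prod_erase Finset.univ (fun j => MvPolynomial.X j ^ α j) (mem_univ j0)
  -- the cofactor matrices
  set E : (Fin m → Fin N) → Matrix (Fin m) (Fin N) (MvPolynomial (Fin n) ℂ) :=
    fun g => Matrix.of fun a b => if g a = b then 1 else 0 with hE
  set R : (Fin m → Fin N) → Matrix (Fin m) (Fin N) (MvPolynomial (Fin n) ℂ) :=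
    fun g => Matrix.adjugate (P.submatrix g id) * E g with hR
  have hEP : ∀ g, E g * P = P.submatrix g id := by
    intro g
    ext a l
    rw [Matrix.mul_apply]
    simp [hE, ite_mul, Matrix.submatrix_apply]
  have hRP : ∀ g, R g * P = minor g • (1 : Matrix (Fin m) (Fin m) (MvPolynomial (Fin n) ℂ)) := by
    intro g
    rw [hR, Matrix.mul_assoc, hEP, Matrix.adjugate_mul]
  have hRh : ∀ g a b, ((R g) a b).IsHomogeneous (m - 1) := by
    intro g a b
    show ((Matrix.adjugate (P.submatrix g id) * E g) a b).IsHomogeneous (m - 1)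
    rw [Matrix.mul_apply]
    apply MvPolynomial.IsHomogeneous.sum
    intro a' _
    have hadj : ((Matrix.adjugate (P.submatrix g id)) a a').IsHomogeneous (m - 1) :=
      adj_isHomogeneous _ (fun i j => hP1 (g i) j) a a'
    by_cases hgb : g a' = b
    · simpa [hE, hgb] using hadj
    · simpa [hE, hgb] using isHomogeneous_zero (Fin n) ℂ (m - 1)
  -- define Q
  refine ⟨Matrix.of fun i t => ∑ g, (c' g * T) * (R g i t), ?_, ?_⟩
  · intro i l
    apply MvPolynomial.IsHomogeneous.sum
    intro g _
    have h1 := ((hc'h g).mul hTh).mul (hRh g i l)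
    have h2 : k - m + (d - k) + (m - 1) = d - 1 := by
      have : (0:ℕ) < m := i.pos
      omega
    rwa [h2] at h1
  · intro ζ
    have hQP : (Matrix.of fun i t => ∑ g, (c' g * T) * (R g i t)) * P
        = (∏ j, MvPolynomial.X (R := ℂ) j ^ α j) • (1 : Matrix (Fin m) (Fin m) _) := by
      refine Matrix.ext (fun i l => ?_)
      rw [Matrix.mul_apply]
      calc ∑ t, (∑ g, (c' g * T) * (R g i t)) * P t l
          = ∑ t, ∑ g, (c' g * T) * (R g i t) * P t l := by
            refine Finset.sum_congr rfl (fun t _ => ?_)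
            rw [Finset.sum_mul]
        _ = ∑ g, ∑ t, (c' g * T) * (R g i t) * P t l := Finset.sum_comm
        _ = ∑ g, (c' g * T) * ((R g * P) i l) := by
            refine Finset.sum_congr rfl (fun g _ => ?_)
            rw [Matrix.mul_apply, Finset.mul_sum]
            exact Finset.sum_congr rfl (fun t _ => by ring)
        _ = ∑ g, (c' g * T) * (minor g * (1 : Matrix (Fin m) (Fin m) _) i l) := by
            refine Finset.sum_congr rfl (fun g _ => ?_)
            rw [hRP g, Matrix.smul_apply, smul_eq_mul]
        _ = (∑ g, c' g * minor g) * (T * (1 : Matrix (Fin m) (Fin m) _) i l) := by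
            rw [Finset.sum_mul]
            exact Finset.sum_congr rfl (fun g _ => by ring)
        _ = (∏ j, MvPolynomial.X j ^ α j) * (1 : Matrix (Fin m) (Fin m) _) i l := by
            rw [hcomb, ← hTX]; ring
        _ = ((∏ j, MvPolynomial.X (R := ℂ) j ^ α j)
            • (1 : Matrix (Fin m) (Fin m) _)) i l := by
            rw [Matrix.smul_apply, smul_eq_mul]
    have h1 := congrArg (fun M => M.map (MvPolynomial.eval ζ)) hQP
    rw [Matrix.map_mul, hPev] at h1
    rw [h1]
    ext i l
    simp [Matrix.map_apply, Matrix.smul_apply, Matrix.one_apply, apply_ite (MvPolynomial.eval ζ)]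
end

section
/- For the rescaled div-curl pair on ℝ², with ℬ = δ (divergence) and 𝒜 = ε d (curl scaled by ε) acting on 1-forms, the Laplace coefficient quadratic form evaluated at the antisymmetric matrix X = [[0, −1], [1, 0]] equals ⟨X, 𝕄X⟩ = −2 + 4ε². In particular, for 0 < ε < 1/√2 the map 𝕄 is indefinite, even though the associated operator 𝒟 = (εd, δ) remains elliptic for every ε > 0. -/
open LinearMap Finset

lemma key_inner (A B : Fin 2 → EuclideanSpace ℝ (Fin 2) →ₗ[ℝ] ℝ)
    (M : Fin 2 → Fin 2 → (EuclideanSpace ℝ (Fin 2) →ₗ[ℝ] EuclideanSpace ℝ (Fin 2)))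
    (hM : ∀ i j, M i j = (adjoint (A i)).comp (A j) + (adjoint (B j)).comp (B i))
    (i j : Fin 2) (v w : EuclideanSpace ℝ (Fin 2)) :
    (inner ℝ v (M i j w) : ℝ) = A i v * A j w + B j v * B i w := by
  rw [hM]
  simp only [LinearMap.add_apply, LinearMap.comp_apply, inner_add_right,
    LinearMap.adjoint_inner_right]
  simp [RCLike.inner_apply, mul_comm]

lemma quad_form (ε : ℝ) (A B : Fin 2 → EuclideanSpace ℝ (Fin 2) →ₗ[ℝ] ℝ)
    (hA0 : ∀ u, A 0 u = ε * u 1) (hA1 : ∀ u, A 1 u = -(ε * u 0))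
    (hB0 : ∀ u, B 0 u = u 0) (hB1 : ∀ u, B 1 u = u 1)
    (M : Fin 2 → Fin 2 → (EuclideanSpace ℝ (Fin 2) →ₗ[ℝ] EuclideanSpace ℝ (Fin 2)))
    (hM : ∀ i j, M i j = (adjoint (A i)).comp (A j) + (adjoint (B j)).comp (B i))
    (X : Fin 2 → EuclideanSpace ℝ (Fin 2)) :
    (∑ i, (inner ℝ (X i) (∑ j, M i j (X j)) : ℝ)) =
      ε ^ 2 * (X 0 1 - X 1 0) ^ 2 + (X 0 0) ^ 2 + (X 1 1) ^ 2 + 2 * X 0 1 * X 1 0 := by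
  have : ∀ i, (inner ℝ (X i) (∑ j, M i j (X j)) : ℝ)
      = ∑ j, (A i (X i) * A j (X j) + B j (X i) * B i (X j)) := by
    intro i
    rw [inner_sum]
    exact Finset.sum_congr rfl fun j _ => key_inner A B M hM i j (X i) (X j)
  rw [Fin.sum_univ_two, this 0, this 1]
  simp only [Fin.sum_univ_two, hA0, hA1, hB0, hB1]
  ring

/-- for the rescaled div-curl pair on ℝ² (`𝒜 = εd`, `ℬ = δ` on 1-forms,
with coefficient maps `A₁u = εu₂`, `A₂u = −εu₁`, `B₁u = u₁`, `B₂u = u₂`), the Laplace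
quadratic form at the antisymmetric matrix `X = [[0,−1],[1,0]]` (columns `X e₁ = (0,1)`,
`X e₂ = (−1,0)`) equals `−2 + 4ε²`; hence for `0 < ε < 1/√2` the map `𝕄` is indefinite,
although `𝒟 = (εd, δ)` is elliptic for every `ε > 0`. -/
theorem rescaled_div_curl_indefinite
    (ε : ℝ)
    (A B : Fin 2 → EuclideanSpace ℝ (Fin 2) →ₗ[ℝ] ℝ)
    (hA0 : ∀ u, A 0 u = ε * u 1) (hA1 : ∀ u, A 1 u = -(ε * u 0))
    (hB0 : ∀ u, B 0 u = u 0) (hB1 : ∀ u, B 1 u = u 1)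
    (M : Fin 2 → Fin 2 → (EuclideanSpace ℝ (Fin 2) →ₗ[ℝ] EuclideanSpace ℝ (Fin 2)))
    (hM : ∀ i j, M i j = (adjoint (A i)).comp (A j) + (adjoint (B j)).comp (B i)) :
    (∀ X : Fin 2 → EuclideanSpace ℝ (Fin 2),
      X 0 0 = 0 → X 0 1 = 1 → X 1 0 = -1 → X 1 1 = 0 →
      (∑ i, (inner ℝ (X i) (∑ j, M i j (X j)) : ℝ)) = -2 + 4 * ε ^ 2) ∧
    (0 < ε → ∀ ξ : Fin 2 → ℝ, ξ ≠ 0 → ∀ u : EuclideanSpace ℝ (Fin 2),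
      (∑ j, ξ j • A j) u = 0 → (∑ j, ξ j • B j) u = 0 → u = 0) ∧
    (0 < ε → ε < 1 / Real.sqrt 2 →
      (∃ X : Fin 2 → EuclideanSpace ℝ (Fin 2),
        (∑ i, (inner ℝ (X i) (∑ j, M i j (X j)) : ℝ)) < 0) ∧
      (∃ Y : Fin 2 → EuclideanSpace ℝ (Fin 2),
        0 < ∑ i, (inner ℝ (Y i) (∑ j, M i j (Y j)) : ℝ))) := by
  refine ⟨?_, ?_, ?_⟩
  · intro X h00 h01 h10 h11
    rw [quad_form ε A B hA0 hA1 hB0 hB1 M hM X, h00, h01, h10, h11]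
    ring
  · intro hε ξ hξ u hAu hBu
    simp only [Fin.sum_univ_two, LinearMap.add_apply, LinearMap.smul_apply, hA0, hA1, hB0, hB1,
      smul_eq_mul] at hAu hBu
    have hξsq : 0 < ξ 0 ^ 2 + ξ 1 ^ 2 := by
      rcases Function.ne_iff.mp hξ with ⟨i, hi⟩
      simp only [Pi.zero_apply] at hi
      fin_cases i
      · have hi' : ξ 0 ≠ 0 := hi
        nlinarith [mul_self_pos.mpr hi', sq_nonneg (ξ 1)]
      · have hi' : ξ 1 ≠ 0 := hi
        nlinarith [mul_self_pos.mpr hi', sq_nonneg (ξ 0)]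
    have hε' : ε ≠ 0 := ne_of_gt hε
    have hmul : ε * (ξ 0 * u 1 - ξ 1 * u 0) = 0 := by linear_combination hAu
    have h1 : ξ 0 * u 1 - ξ 1 * u 0 = 0 :=
      (mul_eq_zero.mp hmul).resolve_left hε'
    have e0 : (ξ 0 ^ 2 + ξ 1 ^ 2) * u 0 = 0 := by
      linear_combination ξ 0 * hBu - ξ 1 * h1
    have e1 : (ξ 0 ^ 2 + ξ 1 ^ 2) * u 1 = 0 := by
      linear_combination ξ 1 * hBu + ξ 0 * h1
    have hu0 : u 0 = 0 := (mul_eq_zero.mp e0).resolve_left (ne_of_gt hξsq)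
    have hu1 : u 1 = 0 := (mul_eq_zero.mp e1).resolve_left (ne_of_gt hξsq)
    ext i
    fin_cases i
    · exact hu0
    · exact hu1
  · intro hε hε2
    have hεsq : ε ^ 2 < 1 / 2 := by
      have h2 : (0:ℝ) < Real.sqrt 2 := Real.sqrt_pos.mpr (by norm_num)
      have : ε * Real.sqrt 2 < 1 := by
        rw [div_eq_mul_inv, one_mul] at hε2
        calc ε * Real.sqrt 2 < (Real.sqrt 2)⁻¹ * Real.sqrt 2 := by
              exact mul_lt_mul_of_pos_right hε2 h2
          _ = 1 := inv_mul_cancel₀ (ne_of_gt h2)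
      nlinarith [Real.sq_sqrt (by norm_num : (2:ℝ) ≥ 0), sq_nonneg (ε * Real.sqrt 2)]
    constructor
    · refine ⟨![WithLp.toLp 2 ![0, 1], WithLp.toLp 2 ![-1, 0]], ?_⟩
      rw [quad_form ε A B hA0 hA1 hB0 hB1 M hM]
      simp
      nlinarith
    · refine ⟨![WithLp.toLp 2 ![1, 0], WithLp.toLp 2 ![0, 0]], ?_⟩
      rw [quad_form ε A B hA0 hA1 hB0 hB1 M hM]
      simp
end
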